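/- The function φ(t) = (r²/3)[6 sin t + 3 sin(2t) + 6√3 cos t + √3 cos(2t) + 4√3] on the interval [0, π/2] attains its minimum at t = π/2, and the minimum value is (2 + √3) r². -/
import Mathlib


open Real

/-- For `r > 0`, the function
`φ(t) = (r²/3)[6 sin t + 3 sin 2t + 6√3 cos t + √3 cos 2t + 4√3]` on `[0, π/2]`
attains its minimum at `t = π/2`, and the minimum value is `(2 + √3) r²`. -/
theorem corner_pentagon_area_min (r : ℝ) (hr : 0 < r) :
    (∀ t ∈ Set.Icc (0 : ℝ) (π / 2),
      r ^ 2 / 3 * (6 * Real.sin (π / 2) + 3 * Real.sin (2 * (π / 2)) +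
        6 * Real.sqrt 3 * Real.cos (π / 2) + Real.sqrt 3 * Real.cos (2 * (π / 2)) +
        4 * Real.sqrt 3) ≤
      r ^ 2 / 3 * (6 * Real.sin t + 3 * Real.sin (2 * t) + 6 * Real.sqrt 3 * Real.cos t +
        Real.sqrt 3 * Real.cos (2 * t) + 4 * Real.sqrt 3)) ∧
    r ^ 2 / 3 * (6 * Real.sin (π / 2) + 3 * Real.sin (2 * (π / 2)) +
      6 * Real.sqrt 3 * Real.cos (π / 2) + Real.sqrt 3 * Real.cos (2 * (π / 2)) +
      4 * Real.sqrt 3) = (2 + Real.sqrt 3) * r ^ 2 := by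
  have h2 : (2 : ℝ) * (π / 2) = π := by ring
  have h3 : Real.sqrt 3 ^ 2 = 3 := Real.sq_sqrt (by norm_num)
  have h31 : (1 : ℝ) ≤ Real.sqrt 3 := by
    nlinarith [Real.sqrt_nonneg 3]
  constructor
  · intro t ht
    obtain ⟨h0, h1⟩ := ht
    have hs : 0 ≤ Real.sin t :=
      Real.sin_nonneg_of_nonneg_of_le_pi h0 (by linarith [Real.pi_pos])
    have hc : 0 ≤ Real.cos t := Real.cos_nonneg_of_mem_Icc ⟨by linarith, h1⟩
    have hs1 : Real.sin t ≤ 1 := Real.sin_le_one t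
    have hc1 : Real.cos t ≤ 1 := Real.cos_le_one t
    have hpyth := Real.sin_sq_add_cos_sq t
    rw [h2, Real.sin_pi_div_two, Real.sin_pi, Real.cos_pi_div_two, Real.cos_pi,
      Real.sin_two_mul, Real.cos_two_mul]
    have key : 6 * 1 + 3 * 0 + 6 * Real.sqrt 3 * 0 + Real.sqrt 3 * (-1) + 4 * Real.sqrt 3 ≤
        6 * Real.sin t + 3 * (2 * Real.sin t * Real.cos t) + 6 * Real.sqrt 3 * Real.cos t +
          Real.sqrt 3 * (2 * Real.cos t ^ 2 - 1) + 4 * Real.sqrt 3 := by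
      nlinarith [mul_nonneg hs hc, mul_nonneg hs (sub_nonneg.mpr hs1),
        mul_nonneg hc (sub_nonneg.mpr hc1), mul_nonneg (mul_nonneg hc hc) (by linarith : (0:ℝ) ≤ Real.sqrt 3 - 1)]
    have hpos : (0 : ℝ) ≤ r ^ 2 / 3 := by positivity
    exact mul_le_mul_of_nonneg_left key hpos
  · rw [h2, Real.sin_pi_div_two, Real.sin_pi, Real.cos_pi_div_two, Real.cos_pi]
    ring
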